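/- For every a > 0 and every z > 0, the posterior mean of the nonzero component under the Laplace prior satisfies μ₁(z) := (∫_ℝ u γ_a(u) φ(z − u) du) / (∫_ℝ γ_a(u) φ(z − u) du) = z − a · { e^{-az} Φ(z − a) − e^{az} Φ̃(z + a) } / { e^{-az} Φ(z − a) + e^{az} Φ̃(z + a) }. -/

import Mathlib

open MeasureTheory Real Filter

/-- The standard normal density. -/
noncomputable def phi (x : ℝ) : ℝ := (Real.sqrt (2 * Real.pi))⁻¹ * Real.exp (-x ^ 2 / 2)

/-- The standard normal cumulative distribution function. -/
noncomputable def Phi (x : ℝ) : ℝ := ∫ t in Set.Iic x, phi t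

/-- The upper tail of the standard normal distribution. -/
noncomputable def PhiBar (x : ℝ) : ℝ := 1 - Phi x

/-- The Laplace density with scale parameter `a`. -/
noncomputable def laplace (a u : ℝ) : ℝ := (a / 2) * Real.exp (-a * |u|)

lemma phi_pos (x : ℝ) : 0 < phi x := by
  unfold phi
  have h : 0 < Real.sqrt (2 * Real.pi) := Real.sqrt_pos.mpr (by positivity)
  positivity

lemma phi_neg (x : ℝ) : phi (-x) = phi x := by unfold phi; ring_nf

lemma phi_eq (x : ℝ) : phi x = (Real.sqrt (2 * Real.pi))⁻¹ * Real.exp (-(1/2 : ℝ) * x ^ 2) := by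
  unfold phi; ring_nf

lemma integrable_phi : Integrable phi := by
  have : Integrable fun x : ℝ => (Real.sqrt (2 * Real.pi))⁻¹ * Real.exp (-(1/2 : ℝ) * x ^ 2) :=
    (integrable_exp_neg_mul_sq (by norm_num : (0:ℝ) < 1/2)).const_mul _
  exact this.congr (Filter.Eventually.of_forall fun x => (phi_eq x).symm)

lemma integrable_mul_phi : Integrable (fun x : ℝ => x * phi x) := by
  have : Integrable fun x : ℝ => (Real.sqrt (2 * Real.pi))⁻¹ *
      (x * Real.exp (-(1/2 : ℝ) * x ^ 2)) :=
    (integrable_mul_exp_neg_mul_sq (by norm_num : (0:ℝ) < 1/2)).const_mul _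
  refine this.congr (Filter.Eventually.of_forall fun x => ?_)
  simp only [phi_eq]; ring

lemma hasDerivAt_neg_phi (x : ℝ) : HasDerivAt (fun t => -phi t) (x * phi x) x := by
  have h1 : HasDerivAt (fun t : ℝ => -t ^ 2 / 2) (-x) x := by
    have := ((hasDerivAt_pow 2 x).neg).div_const 2
    simpa using this.congr_deriv (by ring)
  have h2 : HasDerivAt (fun t : ℝ => Real.exp (-t ^ 2 / 2)) (Real.exp (-x ^ 2 / 2) * (-x)) x :=
    (Real.hasDerivAt_exp _).comp x h1
  have h3 := (h2.const_mul ((Real.sqrt (2 * Real.pi))⁻¹)).neg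
  have : -((Real.sqrt (2 * Real.pi))⁻¹ * (Real.exp (-x ^ 2 / 2) * (-x))) = x * phi x := by
    unfold phi; ring
  rw [this] at h3
  exact h3.congr_of_eventuallyEq (Filter.Eventually.of_forall fun t => by unfold phi; rfl)

lemma tendsto_phi_atTop : Tendsto phi atTop (nhds 0) := by
  have h1 : Tendsto (fun x : ℝ => x ^ 2 / 2) atTop atTop :=
    (tendsto_pow_atTop two_ne_zero).atTop_div_const (by norm_num)
  have h : Tendsto (fun x : ℝ => -x ^ 2 / 2) atTop atBot := by
    have := tendsto_neg_atTop_atBot.comp h1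
    refine this.congr fun x => ?_
    simp [Function.comp, neg_div]
  have h2 := (Real.tendsto_exp_atBot.comp h).const_mul ((Real.sqrt (2 * Real.pi))⁻¹)
  rw [mul_zero] at h2
  exact h2.congr fun x => rfl

lemma tendsto_phi_atBot : Tendsto phi atBot (nhds 0) := by
  have := tendsto_phi_atTop.comp tendsto_neg_atBot_atTop
  refine this.congr fun x => ?_
  simp [Function.comp, phi_neg]

lemma integrable_on_mul_phi (s : Set ℝ) : IntegrableOn (fun t : ℝ => t * phi t) s :=
  integrable_mul_phi.integrableOn

lemma integral_mul_phi_Ioi (c : ℝ) : ∫ t in Set.Ioi c, t * phi t = phi c := by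
  have := integral_Ioi_of_hasDerivAt_of_tendsto' (a := c) (m := 0)
    (f := fun t => -phi t) (f' := fun t => t * phi t)
    (fun x _ => hasDerivAt_neg_phi x) (integrable_on_mul_phi _) (by simpa using tendsto_phi_atTop.neg : Tendsto (fun t => -phi t) atTop (nhds 0))
  simpa using this

lemma integral_mul_phi_Iic (c : ℝ) : ∫ t in Set.Iic c, t * phi t = -phi c := by
  have := integral_Iic_of_hasDerivAt_of_tendsto' (a := c) (m := 0)
    (f := fun t => -phi t) (f' := fun t => t * phi t)
    (fun x _ => hasDerivAt_neg_phi x) (integrable_on_mul_phi _) (by simpa using tendsto_phi_atBot.neg : Tendsto (fun t => -phi t) atBot (nhds 0))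
  simpa using this

lemma integral_phi_Ioi (c : ℝ) : ∫ t in Set.Ioi c, phi t = Phi (-c) := by
  have := integral_comp_neg_Iic (-c) phi
  simp only [neg_neg] at this
  rw [Phi, ← this]
  exact setIntegral_congr_fun measurableSet_Iic fun x _ => phi_neg x

lemma integral_phi_total : ∫ x : ℝ, phi x = 1 := by
  have h := integral_gaussian (1/2 : ℝ)
  have h2 : (Real.pi / (1/2 : ℝ)) = 2 * Real.pi := by ring
  rw [h2] at h
  calc ∫ x : ℝ, phi x = ∫ x : ℝ, (Real.sqrt (2 * Real.pi))⁻¹ * Real.exp (-(1/2:ℝ) * x ^ 2) :=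
        integral_congr_ae (Filter.Eventually.of_forall fun x => phi_eq x)
    _ = (Real.sqrt (2 * Real.pi))⁻¹ * ∫ x : ℝ, Real.exp (-(1/2:ℝ) * x ^ 2) := integral_const_mul _ _
    _ = 1 := by
        rw [h, inv_mul_cancel₀]
        exact ne_of_gt (Real.sqrt_pos.mpr (by positivity))

lemma PhiBar_eq (x : ℝ) : PhiBar x = Phi (-x) := by
  have h := intervalIntegral.integral_Iic_add_Ioi (b := x) (f := phi) (μ := volume)
    integrable_phi.integrableOn integrable_phi.integrableOn
  rw [integral_phi_total, integral_phi_Ioi] at h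
  unfold PhiBar Phi
  unfold Phi at h
  linarith

lemma Phi_pos (x : ℝ) : 0 < Phi x := by
  unfold Phi
  rw [setIntegral_pos_iff_support_of_nonneg_ae
    (Filter.Eventually.of_forall fun t => (phi_pos t).le) integrable_phi.integrableOn]
  have : Function.support phi = Set.univ := by
    ext t; simp [Function.support, ne_of_gt (phi_pos t)]
  rw [this, Set.univ_inter]
  simp [Real.volume_Iic]

lemma setIntegral_comp_sub_Ioi (c d : ℝ) (f : ℝ → ℝ) :
    (∫ x in Set.Ioi c, f (x - d)) = ∫ x in Set.Ioi (c - d), f x := by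
  have A : MeasurableEmbedding fun x : ℝ => x - d :=
    (Homeomorph.subRight d).isClosedEmbedding.measurableEmbedding
  have B := A.setIntegral_map (μ := volume) f (Set.Ioi (c - d))
  have hmap : Measure.map (fun x : ℝ => x - d) volume = volume := by
    simpa [sub_eq_add_neg] using map_add_right_eq_self (volume : Measure ℝ) (-d)
  rw [hmap] at B
  rw [B]
  congr 1
  ext x
  simp [sub_lt_sub_iff_right, lt_sub_iff_add_lt, sub_lt_iff_lt_add]

lemma setIntegral_comp_sub_Iic (c d : ℝ) (f : ℝ → ℝ) :
    (∫ x in Set.Iic c, f (x - d)) = ∫ x in Set.Iic (c - d), f x := by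
  have A : MeasurableEmbedding fun x : ℝ => x - d :=
    (Homeomorph.subRight d).isClosedEmbedding.measurableEmbedding
  have B := A.setIntegral_map (μ := volume) f (Set.Iic (c - d))
  have hmap : Measure.map (fun x : ℝ => x - d) volume = volume := by
    simpa [sub_eq_add_neg] using map_add_right_eq_self (volume : Measure ℝ) (-d)
  rw [hmap] at B
  rw [B]
  congr 1
  ext x
  simp [sub_le_sub_iff_right, sub_le_iff_le_add]


lemma integrable_comp_sub {f : ℝ → ℝ} (hf : Integrable f) (d : ℝ) :
    Integrable (fun x => f (x - d)) := by
  have A : MeasurableEmbedding fun x : ℝ => x - d :=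
    (Homeomorph.subRight d).isClosedEmbedding.measurableEmbedding
  have hmap : Measure.map (fun x : ℝ => x - d) volume = volume := by
    simpa [sub_eq_add_neg] using map_add_right_eq_self (volume : Measure ℝ) (-d)
  have : Integrable f (Measure.map (fun x : ℝ => x - d) volume) := by rw [hmap]; exact hf
  exact A.integrable_map_iff.mp this

lemma integrable_phi_shift (m : ℝ) : Integrable (fun u : ℝ => phi (u - m)) :=
  integrable_comp_sub integrable_phi m

lemma integrable_mul_phi_shift (m : ℝ) : Integrable (fun u : ℝ => u * phi (u - m)) := by
  have h1 : Integrable (fun u : ℝ => (u - m) * phi (u - m)) :=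
    integrable_comp_sub integrable_mul_phi m
  have h2 := h1.add ((integrable_phi_shift m).const_mul m)
  exact h2.congr (Filter.Eventually.of_forall fun u => by simp only [Pi.add_apply]; ring)

lemma integral_phi_shift_Ioi (m : ℝ) : ∫ u in Set.Ioi (0:ℝ), phi (u - m) = Phi m := by
  rw [setIntegral_comp_sub_Ioi 0 m phi, zero_sub, integral_phi_Ioi, neg_neg]

lemma integral_phi_shift_Iic (m : ℝ) : ∫ u in Set.Iic (0:ℝ), phi (u - m) = Phi (-m) := by
  rw [setIntegral_comp_sub_Iic 0 m phi, zero_sub]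
  rfl

lemma integral_mul_phi_shift_Ioi (m : ℝ) :
    ∫ u in Set.Ioi (0:ℝ), u * phi (u - m) = phi m + m * Phi m := by
  have split : ∫ u in Set.Ioi (0:ℝ), u * phi (u - m)
      = (∫ u in Set.Ioi (0:ℝ), (u - m) * phi (u - m))
        + ∫ u in Set.Ioi (0:ℝ), m * phi (u - m) := by
    rw [← integral_add (integrable_comp_sub integrable_mul_phi m).integrableOn
      (((integrable_phi_shift m).const_mul m)).integrableOn]
    exact setIntegral_congr_fun measurableSet_Ioi fun u _ => by ring
  have h1 := setIntegral_comp_sub_Ioi 0 m (fun t => t * phi t)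
  simp only [zero_sub] at h1
  rw [split, h1, integral_mul_phi_Ioi, phi_neg, integral_const_mul, integral_phi_shift_Ioi]

lemma integral_mul_phi_shift_Iic (m : ℝ) :
    ∫ u in Set.Iic (0:ℝ), u * phi (u - m) = -phi m + m * Phi (-m) := by
  have split : ∫ u in Set.Iic (0:ℝ), u * phi (u - m)
      = (∫ u in Set.Iic (0:ℝ), (u - m) * phi (u - m))
        + ∫ u in Set.Iic (0:ℝ), m * phi (u - m) := by
    rw [← integral_add (integrable_comp_sub integrable_mul_phi m).integrableOn
      (((integrable_phi_shift m).const_mul m)).integrableOn]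
    exact setIntegral_congr_fun measurableSet_Iic fun u _ => by ring
  have h1 := setIntegral_comp_sub_Iic 0 m (fun t => t * phi t)
  simp only [zero_sub] at h1
  rw [split, h1, integral_mul_phi_Iic, phi_neg, integral_const_mul, integral_phi_shift_Iic]

/-- The posterior mean of the nonzero component under the Laplace prior. -/
theorem laplace_posterior_mean (a z : ℝ) (ha : 0 < a) (hz : 0 < z) :
    (∫ u : ℝ, u * laplace a u * phi (z - u)) / (∫ u : ℝ, laplace a u * phi (z - u))
      = z - a * (Real.exp (-a * z) * Phi (z - a) - Real.exp (a * z) * PhiBar (z + a)) /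
              (Real.exp (-a * z) * Phi (z - a) + Real.exp (a * z) * PhiBar (z + a)) := by
  have c_pos : (0:ℝ) < (Real.sqrt (2 * Real.pi))⁻¹ := by
    have : 0 < Real.sqrt (2 * Real.pi) := Real.sqrt_pos.mpr (by positivity)
    positivity
  set E1 : ℝ := Real.exp (a ^ 2 / 2 - a * z) with hE1
  set E2 : ℝ := Real.exp (a ^ 2 / 2 + a * z) with hE2
  -- pointwise identities
  have e1 : ∀ u : ℝ, Real.exp (-a * u) * Real.exp (-(z - u) ^ 2 / 2)
      = E1 * Real.exp (-(u - (z - a)) ^ 2 / 2) := fun u => by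
    rw [hE1, ← Real.exp_add, ← Real.exp_add]; congr 1; ring
  have e2 : ∀ u : ℝ, Real.exp (-a * -u) * Real.exp (-(z - u) ^ 2 / 2)
      = E2 * Real.exp (-(u - (z + a)) ^ 2 / 2) := fun u => by
    rw [hE2, ← Real.exp_add, ← Real.exp_add]; congr 1; ring
  have key1 : ∀ u : ℝ, 0 ≤ u → laplace a u * phi (z - u)
      = (a / 2 * E1) * phi (u - (z - a)) := by
    intro u hu
    unfold laplace phi
    rw [abs_of_nonneg hu]
    linear_combination (a / 2) * (Real.sqrt (2 * Real.pi))⁻¹ * e1 u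
  have key2 : ∀ u : ℝ, u ≤ 0 → laplace a u * phi (z - u)
      = (a / 2 * E2) * phi (u - (z + a)) := by
    intro u hu
    unfold laplace phi
    rw [abs_of_nonpos hu]
    linear_combination (a / 2) * (Real.sqrt (2 * Real.pi))⁻¹ * e2 u
  have key1' : ∀ u : ℝ, 0 ≤ u → u * laplace a u * phi (z - u)
      = (a / 2 * E1) * (u * phi (u - (z - a))) := by
    intro u hu
    have := key1 u hu
    linear_combination u * this
  have key2' : ∀ u : ℝ, u ≤ 0 → u * laplace a u * phi (z - u)
      = (a / 2 * E2) * (u * phi (u - (z + a))) := by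
    intro u hu
    have := key2 u hu
    linear_combination u * this
  -- integrability on halves
  have hDIoi : IntegrableOn (fun u : ℝ => laplace a u * phi (z - u)) (Set.Ioi 0) := by
    exact ((((integrable_phi_shift (z - a)).const_mul _)).integrableOn).congr_fun
      (fun u hu => (key1 u (le_of_lt hu)).symm) measurableSet_Ioi
  have hDIic : IntegrableOn (fun u : ℝ => laplace a u * phi (z - u)) (Set.Iic 0) := by
    exact ((((integrable_phi_shift (z + a)).const_mul _)).integrableOn).congr_fun
      (fun u hu => (key2 u hu).symm) measurableSet_Iic
  have hNIoi : IntegrableOn (fun u : ℝ => u * laplace a u * phi (z - u)) (Set.Ioi 0) := by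
    exact ((((integrable_mul_phi_shift (z - a)).const_mul _)).integrableOn).congr_fun
      (fun u hu => (key1' u (le_of_lt hu)).symm) measurableSet_Ioi
  have hNIic : IntegrableOn (fun u : ℝ => u * laplace a u * phi (z - u)) (Set.Iic 0) := by
    exact ((((integrable_mul_phi_shift (z + a)).const_mul _)).integrableOn).congr_fun
      (fun u hu => (key2' u hu).symm) measurableSet_Iic
  -- the four half-line integrals
  have ID1 : ∫ u in Set.Ioi (0:ℝ), laplace a u * phi (z - u)
      = (a / 2 * E1) * Phi (z - a) := by
    rw [setIntegral_congr_fun measurableSet_Ioi (fun u hu => key1 u (le_of_lt hu)),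
      integral_const_mul, integral_phi_shift_Ioi]
  have ID2 : ∫ u in Set.Iic (0:ℝ), laplace a u * phi (z - u)
      = (a / 2 * E2) * PhiBar (z + a) := by
    rw [setIntegral_congr_fun measurableSet_Iic (fun u hu => key2 u hu),
      integral_const_mul, integral_phi_shift_Iic, ← PhiBar_eq]
  have IN1 : ∫ u in Set.Ioi (0:ℝ), u * laplace a u * phi (z - u)
      = (a / 2 * E1) * (phi (z - a) + (z - a) * Phi (z - a)) := by
    rw [setIntegral_congr_fun measurableSet_Ioi (fun u hu => key1' u (le_of_lt hu)),
      integral_const_mul, integral_mul_phi_shift_Ioi]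
  have IN2 : ∫ u in Set.Iic (0:ℝ), u * laplace a u * phi (z - u)
      = (a / 2 * E2) * (-phi (z + a) + (z + a) * PhiBar (z + a)) := by
    rw [setIntegral_congr_fun measurableSet_Iic (fun u hu => key2' u hu),
      integral_const_mul, integral_mul_phi_shift_Iic, ← PhiBar_eq]
  -- totals
  have hD : ∫ u : ℝ, laplace a u * phi (z - u)
      = (a / 2 * E2) * PhiBar (z + a) + (a / 2 * E1) * Phi (z - a) := by
    rw [← intervalIntegral.integral_Iic_add_Ioi hDIic hDIoi, ID1, ID2]
  have hN : ∫ u : ℝ, u * laplace a u * phi (z - u)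
      = (a / 2 * E2) * (-phi (z + a) + (z + a) * PhiBar (z + a))
        + (a / 2 * E1) * (phi (z - a) + (z - a) * Phi (z - a)) := by
    rw [← intervalIntegral.integral_Iic_add_Ioi hNIic hNIoi, IN1, IN2]
  -- cancellation of the density terms
  have hc1 : E1 * phi (z - a) = phi z := by
    unfold phi
    rw [hE1, mul_left_comm, ← Real.exp_add]
    congr 2
    ring
  have hc2 : E2 * phi (z + a) = phi z := by
    unfold phi
    rw [hE2, mul_left_comm, ← Real.exp_add]
    congr 2
    ring
  -- split the exponentials
  have hE1' : E1 = Real.exp (a ^ 2 / 2) * Real.exp (-a * z) := by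
    rw [hE1, ← Real.exp_add]
    congr 1
    ring
  have hE2' : E2 = Real.exp (a ^ 2 / 2) * Real.exp (a * z) := by
    rw [hE2, ← Real.exp_add]
  set P : ℝ := Real.exp (-a * z) * Phi (z - a) with hP
  set Q : ℝ := Real.exp (a * z) * PhiBar (z + a) with hQ
  have hPpos : 0 < P := mul_pos (Real.exp_pos _) (Phi_pos _)
  have hQpos : 0 < Q := by
    rw [hQ, PhiBar_eq]
    exact mul_pos (Real.exp_pos _) (Phi_pos _)
  have hPQ : P + Q ≠ 0 := by positivity
  have hT : (0:ℝ) < a / 2 * Real.exp (a ^ 2 / 2) := by positivity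
  have hDval : ∫ u : ℝ, laplace a u * phi (z - u)
      = (a / 2 * Real.exp (a ^ 2 / 2)) * (P + Q) := by
    rw [hD, hE1', hE2', hP, hQ]; ring
  have hNval : ∫ u : ℝ, u * laplace a u * phi (z - u)
      = (a / 2 * Real.exp (a ^ 2 / 2)) * (z * (P + Q) - a * (P - Q)) := by
    rw [hN, hE1', hE2', hP, hQ]
    have c1 : Real.exp (a ^ 2 / 2) * Real.exp (-a * z) * phi (z - a) = phi z := by
      rw [← hE1', hc1]
    have c2 : Real.exp (a ^ 2 / 2) * Real.exp (a * z) * phi (z + a) = phi z := by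
      rw [← hE2', hc2]
    linear_combination (a / 2) * c1 - (a / 2) * c2
  rw [hDval, hNval]
  field_simp
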